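/- For every integer m ≥ 1, the extreme polar coefficient satisfies c_m^F(−1, m) = m + 2, where c_m^F(−1, m) is defined by the SL(2,ℤ) continued-fraction sum. -/

import Mathlib

/-- `d n`: the coefficient of `q^(n+1)` in `∏ (1 - q^j)^{-24}`, i.e. the number of
24-tuples of integer partitions whose sizes sum to `n+1` (and `0` for `n < -1`). -/
def dcoef (n : ℤ) : ℤ :=
  if 0 ≤ n + 1 then
    ∑ v ∈ Finset.Nat.antidiagonalTuple 24 (n + 1).toNat,
      ∏ i, (Fintype.card (Nat.Partition (v i)) : ℤ)
  else 0

/-- The polar coefficient `c_m^F(ñ, ℓ̃)`, given by the `SL(2,ℤ)` continued-fraction sum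
over quadruples `(p, q, r, s)` with `ps - qr = 1`, `r, s > 0` and
`0 ≤ ℓ̃/(2m) - q/s < 1/(rs)`; only finitely many terms are nonzero. -/
noncomputable def polarCoef (m nt ℓt : ℤ) : ℤ :=
  ∑ᶠ (p : ℤ) (q : ℤ) (r : ℤ) (s : ℤ),
    if p * s - q * r = 1 ∧ 0 < r ∧ 0 < s ∧
        0 ≤ (ℓt : ℚ) / (2 * m) - (q : ℚ) / s ∧
        (ℓt : ℚ) / (2 * m) - (q : ℚ) / s < 1 / ((r : ℚ) * s) then
      (-2 * r * s * nt - 2 * p * q * m + (p * s + q * r) * ℓt) *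
        dcoef (r ^ 2 * nt + p ^ 2 * m - p * r * ℓt) *
        dcoef (s ^ 2 * nt + q ^ 2 * m - q * s * ℓt)
    else 0

/-!
For `ñ = -1` and `ℓ̃ = m` the window condition on `q / s` becomes `2q ≤ s` and `r (s - 2q) < 2`.
Together with `ps - qr = 1` this leaves only `q = 1, s = 2`, whose second `d`-factor has argument
`-4 - m < -1` and vanishes, and the identity quadruple `(1, 0, 1, 1)`, which contributes
`(m + 2) d(-1)² = m + 2`.
-/

lemma dcoef_neg_one : dcoef (-1) = 1 := by
  simp [dcoef, Finset.Nat.antidiagonalTuple_zero_right, Fintype.card_unique]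

lemma dcoef_of_lt {n : ℤ} (h : n < -1) : dcoef n = 0 := if_neg (by omega)

lemma finsum_ite_eq_and₄ {α β γ δ M : Type*} [AddCommMonoid M] [DecidableEq α] [DecidableEq β]
    [DecidableEq γ] [DecidableEq δ] (a : α) (b : β) (c : γ) (d : δ) (x : M) :
    ∑ᶠ (i : α) (j : β) (k : γ) (l : δ), (if i = a ∧ j = b ∧ k = c ∧ l = d then x else 0) = x := by
  rw [finsum_eq_single _ a (by simp_all), finsum_eq_single _ b (by simp_all),
    finsum_eq_single _ c (by simp_all), finsum_eq_single _ d (by simp_all)]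
  simp

lemma half_window_iff {q r s : ℤ} (hr : 0 < r) (hs : 0 < s) :
    (0 ≤ (1 / 2 : ℚ) - q / s ∧ (1 / 2 : ℚ) - q / s < 1 / (r * s)) ↔
      2 * q ≤ s ∧ r * (s - 2 * q) < 2 := by
  have hsQ : (0 : ℚ) < s := by exact_mod_cast hs
  have hrQ : (0 : ℚ) < r := by exact_mod_cast hr
  rw [show (1 / 2 : ℚ) - q / s = (s - 2 * q) / (2 * s) by field_simp, div_nonneg_iff,
    div_lt_div_iff₀ (by positivity) (by positivity)]
  constructor
  · rintro ⟨h0 | h0, h1⟩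
    · constructor
      · exact_mod_cast (sub_nonneg.mp h0.1)
      · have : ((s : ℚ) - 2 * q) * r < 2 := by nlinarith
        exact_mod_cast (by linarith : (r : ℚ) * (s - 2 * q) < 2)
    · exfalso; linarith [h0.2]
  · rintro ⟨h0, h1⟩
    have h0' : (2 * q : ℚ) ≤ s := by exact_mod_cast h0
    have h1' : (r : ℚ) * (s - 2 * q) < 2 := by exact_mod_cast h1
    exact ⟨Or.inl ⟨by linarith, by positivity⟩, by nlinarith⟩

lemma eq_of_det_eq_one_of_half_window {p q r s : ℤ} (hdet : p * s - q * r = 1) (hr : 0 < r)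
    (hs : 0 < s) (h0 : 2 * q ≤ s) (h1 : r * (s - 2 * q) < 2) :
    (q = 1 ∧ s = 2) ∨ (p = 1 ∧ q = 0 ∧ r = 1 ∧ s = 1) := by
  obtain hs2q | ⟨hs2q, rfl⟩ : s = 2 * q ∨ (s = 2 * q + 1 ∧ r = 1) := by
    by_cases hs2q : s = 2 * q
    · exact Or.inl hs2q
    · have ht : 1 ≤ s - 2 * q := by omega
      have := mul_nonneg (sub_nonneg.2 hr) (sub_nonneg.2 ht)
      exact Or.inr ⟨by nlinarith, by nlinarith⟩
  · subst hs2q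
    have hq : q = 1 := Int.eq_one_of_mul_eq_one_right (by omega) (by linarith : q * (2 * p - r) = 1)
    exact Or.inl ⟨hq, by omega⟩
  · subst hs2q
    -- `p (2q + 1) = q + 1` with `0 < q + 1 < 2q + 1` is impossible unless `q = 0`
    have hq : q = 0 := by
      by_contra hq
      have hq1 : 1 ≤ q := by omega
      rcases le_or_gt p 0 with hp | hp
      · nlinarith
      · nlinarith [mul_nonneg (sub_nonneg.2 hp) (by omega : (0 : ℤ) ≤ 2 * q + 1)]
    subst hq
    exact Or.inr ⟨by linarith, rfl, rfl, rfl⟩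

def polarTerm (m nt ℓt p q r s : ℤ) : ℤ :=
  if p * s - q * r = 1 ∧ 0 < r ∧ 0 < s ∧
      0 ≤ (ℓt : ℚ) / (2 * m) - (q : ℚ) / s ∧
      (ℓt : ℚ) / (2 * m) - (q : ℚ) / s < 1 / ((r : ℚ) * s) then
    (-2 * r * s * nt - 2 * p * q * m + (p * s + q * r) * ℓt) *
      dcoef (r ^ 2 * nt + p ^ 2 * m - p * r * ℓt) *
      dcoef (s ^ 2 * nt + q ^ 2 * m - q * s * ℓt)
  else 0

lemma polarCoef_eq_finsum_polarTerm (m nt ℓt : ℤ) :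
    polarCoef m nt ℓt = ∑ᶠ (p : ℤ) (q : ℤ) (r : ℤ) (s : ℤ), polarTerm m nt ℓt p q r s := rfl

lemma polarTerm_neg_one_self {m : ℤ} (hm : 0 < m) (p q r s : ℤ) :
    polarTerm m (-1) m p q r s = if p = 1 ∧ q = 0 ∧ r = 1 ∧ s = 1 then m + 2 else 0 := by
  have hhalf : (m : ℚ) / (2 * m) = 1 / 2 := by field_simp
  rw [polarTerm, hhalf]
  split_ifs with hwin hpt hpt
  · obtain ⟨rfl, rfl, rfl, rfl⟩ := hpt
    norm_num [dcoef_neg_one]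
    ring
  · obtain ⟨hdet, hr, hs, hwin⟩ := hwin
    obtain ⟨h0, h1⟩ := (half_window_iff hr hs).mp hwin
    rcases eq_of_det_eq_one_of_half_window hdet hr hs h0 h1 with ⟨rfl, rfl⟩ | hpt'
    · rw [dcoef_of_lt (show 2 ^ 2 * (-1) + 1 ^ 2 * m - 1 * 2 * m < -1 by linarith), mul_zero]
    · exact absurd hpt' hpt
  · obtain ⟨rfl, rfl, rfl, rfl⟩ := hpt
    exact absurd
      ⟨by norm_num, one_pos, one_pos, (half_window_iff one_pos one_pos).mpr (by norm_num)⟩ hwin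
  · rfl

theorem stmt14 (m : ℤ) (hm : 1 ≤ m) : polarCoef m (-1) m = m + 2 := by
  simp_rw [polarCoef_eq_finsum_polarTerm, polarTerm_neg_one_self (by omega : 0 < m)]
  exact finsum_ite_eq_and₄ 1 0 1 1 (m + 2)
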